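/- For every integer N ≥ 7 one has γ₂((√6−√2)/2) < 0. Consequently, the unique zero t* of γ₂ in (0,1) satisfies t* > (√6−√2)/2. -/
import Mathlib


open Real Filter Set

/-- `γ₂(t) = (1−t²)^{-(N−2)} − 2·(√2·t)^{-(N−2)} + 2·(t⁴+1)^{-(N−2)/2} − (2t)^{-(N−2)} + (t²+1)^{-(N−2)}`. -/
noncomputable def gamma2 (N : ℕ) (t : ℝ) : ℝ :=
  (1 - t ^ 2) ^ (-((N : ℝ) - 2)) - 2 * (Real.sqrt 2 * t) ^ (-((N : ℝ) - 2)) +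
    2 * (t ^ 4 + 1) ^ (-((N : ℝ) - 2) / 2) - (2 * t) ^ (-((N : ℝ) - 2)) +
    (t ^ 2 + 1) ^ (-((N : ℝ) - 2))

lemma gamma2_neg_aux (N : ℕ) (hN : 7 ≤ N) {t : ℝ} (ht : 0 < t)
    (ht0 : t ≤ (Real.sqrt 6 - Real.sqrt 2) / 2) : gamma2 N t < 0 := by
  have hm : (5 : ℝ) ≤ (N : ℝ) - 2 := by
    have : (7 : ℝ) ≤ (N : ℝ) := by exact_mod_cast hN
    linarith
  set m : ℝ := (N : ℝ) - 2 with hmdef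
  have hs2 : Real.sqrt 2 ^ 2 = 2 := Real.sq_sqrt (by norm_num)
  have hs3 : Real.sqrt 3 ^ 2 = 3 := Real.sq_sqrt (by norm_num)
  have hs2pos : 0 < Real.sqrt 2 := Real.sqrt_pos.2 (by norm_num)
  have hs3pos : 0 < Real.sqrt 3 := Real.sqrt_pos.2 (by norm_num)
  have hs6 : Real.sqrt 6 = Real.sqrt 2 * Real.sqrt 3 := by
    rw [show (6:ℝ) = 2 * 3 by norm_num, Real.sqrt_mul (by norm_num)]
  -- key identity facts at t0
  have hkey : Real.sqrt 2 * ((Real.sqrt 6 - Real.sqrt 2) / 2) = Real.sqrt 3 - 1 := by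
    rw [hs6]; nlinarith [hs2]
  have hsq0 : ((Real.sqrt 6 - Real.sqrt 2) / 2) ^ 2 = 2 - Real.sqrt 3 := by
    rw [hs6]; nlinarith [hs2, hs3]
  have hs3le : Real.sqrt 3 ≤ 7 / 4 := by nlinarith [hs3, hs3pos]
  -- √2 t + t² ≤ 1
  have h1 : Real.sqrt 2 * t + t ^ 2 ≤ 1 := by
    nlinarith [hkey, hsq0, ht0, ht, hs2pos, hs3pos, mul_nonneg (sub_nonneg.2 ht0) ht.le,
      mul_nonneg (sub_nonneg.2 ht0) hs2pos.le,
      mul_nonneg (sub_nonneg.2 ht0) (sub_nonneg.2 ht0)]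
  have hs2t_pos : 0 < Real.sqrt 2 * t := by positivity
  have h1m : 0 < 1 - t ^ 2 := by nlinarith
  have hmneg : -m ≤ 0 := by linarith
  -- A ≤ B
  have hAB : (1 - t ^ 2) ^ (-m) ≤ (Real.sqrt 2 * t) ^ (-m) :=
    Real.rpow_le_rpow_of_nonpos hs2t_pos (by linarith) hmneg
  -- C ≤ 1, E ≤ 1
  have hC : (t ^ 4 + 1) ^ (-m / 2) ≤ 1 :=
    Real.rpow_le_one_of_one_le_of_nonpos (by nlinarith [pow_pos ht 4]) (by linarith)
  have hE : (t ^ 2 + 1) ^ (-m) ≤ 1 :=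
    Real.rpow_le_one_of_one_le_of_nonpos (by nlinarith) hmneg
  -- D > 0
  have hD : 0 < (2 * t) ^ (-m) := Real.rpow_pos_of_pos (by linarith) _
  -- B ≥ 3
  have ht34 : Real.sqrt 2 * t ≤ 3 / 4 := by
    have := mul_le_mul_of_nonneg_left ht0 hs2pos.le
    rw [hkey] at this
    linarith
  have hB1 : ((3 : ℝ) / 4) ^ (-m) ≤ (Real.sqrt 2 * t) ^ (-m) :=
    Real.rpow_le_rpow_of_nonpos hs2t_pos ht34 hmneg
  have hB2 : ((3 : ℝ) / 4) ^ (-m) = ((4 : ℝ) / 3) ^ m := by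
    rw [Real.rpow_neg (by norm_num), ← Real.inv_rpow (by norm_num)]
    norm_num
  have hB3 : ((4 : ℝ) / 3) ^ (5 : ℝ) ≤ ((4 : ℝ) / 3) ^ m :=
    Real.rpow_le_rpow_of_exponent_le (by norm_num) hm
  have hB4 : ((4 : ℝ) / 3) ^ (5 : ℝ) = 1024 / 243 := by
    rw [show (5 : ℝ) = ((5 : ℕ) : ℝ) by norm_num, Real.rpow_natCast]
    norm_num
  have hB : (3 : ℝ) ≤ (Real.sqrt 2 * t) ^ (-m) := by
    rw [hB2] at hB1
    rw [hB4] at hB3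
    linarith
  unfold gamma2
  rw [← hmdef]
  linarith

theorem stmt_8 (N : ℕ) (hN : 7 ≤ N) :
    gamma2 N ((Real.sqrt 6 - Real.sqrt 2) / 2) < 0 ∧
    ∀ tstar ∈ Ioo (0 : ℝ) 1, gamma2 N tstar = 0 →
      (Real.sqrt 6 - Real.sqrt 2) / 2 < tstar := by
  have ht0pos : 0 < (Real.sqrt 6 - Real.sqrt 2) / 2 := by
    have h2 : Real.sqrt 2 < Real.sqrt 6 := by
      apply Real.sqrt_lt_sqrt <;> norm_num
    linarith
  refine ⟨gamma2_neg_aux N hN ht0pos le_rfl, ?_⟩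
  intro tstar htstar hzero
  by_contra h
  push_neg at h
  have := gamma2_neg_aux N hN htstar.1 h
  linarith
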